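/- For α ∈ (0,1), y ∈ [1/2,1] and every integer n ≥ 27, letting β_n = ∏_{k=1}^{2n-1}(1−α/k), one has 2^α ≥ α·β_n/(2n) + (2-2y)^{α/2} + α·β_n·I_n(y), where I_n(y) = ∫₀¹ ((1-t)/√(1+t²-2ty))^{2n-1} (√(1+t²-2ty))^{α-1} dt. -/

import Mathlib

/-!
Write `u = 1 + t² - 2ty`, so that `u = (1 - t)² + 2t(1 - y) ≥ (1 - t)²`. The quotient
`(1 - t)/√u` is then at most `1`, and the integrand is bounded by
`(1 - t) u^((α-2)/2) = (y - t) u^((α-2)/2) + (1 - y) u^((α-2)/2)`. The first summand is the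
derivative of `-u^(α/2)/α`, which integrates to `(1 - (2 - 2y)^(α/2))/α`; the second is at most
`(1 - y)/u ≤ (1 - y)/(1 - y²) = 1/(1 + y) ≤ 2/3`. With `β ∈ [0, 1]` and `1/(2n) ≤ 1/54` the
inequality reduces to `α β (1/54 + 2/3) ≤ α log 2 ≤ 2^α - 1`.
-/

open Real Set

/-- `|1 - t e^{iθ}|²` for `y = cos θ`. -/
def chordSq (y t : ℝ) : ℝ := 1 + t ^ 2 - 2 * t * y

section chordSq

variable {y t : ℝ}

lemma sq_one_sub_le_chordSq (ht : 0 ≤ t) (hy : y ≤ 1) : (1 - t) ^ 2 ≤ chordSq y t := by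
  unfold chordSq; nlinarith

lemma one_sub_sq_le_chordSq : 1 - y ^ 2 ≤ chordSq y t := by
  unfold chordSq; nlinarith [sq_nonneg (t - y)]

lemma chordSq_le_one (ht0 : 0 ≤ t) (ht1 : t ≤ 1) (hy : 1 / 2 ≤ y) : chordSq y t ≤ 1 := by
  unfold chordSq; nlinarith

lemma chordSq_pos (ht0 : 0 ≤ t) (ht1 : t < 1) (hy : y ≤ 1) : 0 < chordSq y t :=
  (pow_pos (sub_pos.2 ht1) 2).trans_le (sq_one_sub_le_chordSq ht0 hy)

lemma continuous_chordSq : Continuous (chordSq y) := by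
  unfold chordSq; fun_prop

lemma hasDerivAt_chordSq : HasDerivAt (chordSq y) (2 * t - 2 * y) t := by
  have := (((hasDerivAt_id t).pow 2).const_add 1).sub (((hasDerivAt_id t).const_mul 2).mul_const y)
  exact this.congr_deriv (by simp)

lemma hasDerivAt_neg_chordSq_rpow_div {α : ℝ} (hα : α ≠ 0) (hu : 0 < chordSq y t) :
    HasDerivAt (fun s => -(chordSq y s ^ (α / 2) / α))
      ((y - t) * chordSq y t ^ ((α - 2) / 2)) t := by
  refine ((hasDerivAt_chordSq.rpow_const (p := α / 2) (Or.inl hu.ne')).div_const α).neg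
    |>.congr_deriv ?_
  rw [show α / 2 - 1 = (α - 2) / 2 by ring]
  field_simp
  ring

end chordSq

section integrand

variable {α y t : ℝ}

lemma one_sub_mul_chordSq_rpow_le (hα : 0 ≤ α) (ht0 : 0 ≤ t) (ht1 : t < 1) (hy : y ∈ Icc (1 / 2 : ℝ) 1) :
    (1 - t) * chordSq y t ^ ((α - 2) / 2) ≤
      (y - t) * chordSq y t ^ ((α - 2) / 2) + 1 / (1 + y) := by
  obtain ⟨hy1, hy2⟩ := hy
  have hu := chordSq_pos ht0 ht1 hy2
  have hrpow : chordSq y t ^ ((α - 2) / 2) ≤ (chordSq y t)⁻¹ := by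
    rw [← rpow_neg_one]
    exact rpow_le_rpow_of_exponent_ge hu (chordSq_le_one ht0 ht1.le hy1) (by linarith)
  have hinv : (1 - y) * (chordSq y t)⁻¹ ≤ 1 / (1 + y) := by
    rw [← div_eq_mul_inv, div_le_div_iff₀ hu (by linarith)]
    nlinarith [one_sub_sq_le_chordSq (y := y) (t := t)]
  nlinarith [mul_le_mul_of_nonneg_left hrpow (sub_nonneg.2 hy2)]

lemma integrand_le {m : ℕ} (hm : m ≠ 0) (hα : 0 ≤ α) (ht0 : 0 ≤ t) (ht1 : t < 1)
    (hy : y ∈ Icc (1 / 2 : ℝ) 1) :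
    ((1 - t) / √(chordSq y t)) ^ m * √(chordSq y t) ^ (α - 1) ≤
      (y - t) * chordSq y t ^ ((α - 2) / 2) + 1 / (1 + y) := by
  have hu := chordSq_pos ht0 ht1 hy.2
  have hs : 0 < √(chordSq y t) := sqrt_pos.2 hu
  have hratio : (1 - t) / √(chordSq y t) ≤ 1 := by
    rw [div_le_one hs, ← sqrt_sq (sub_nonneg.2 ht1.le)]
    exact sqrt_le_sqrt (sq_one_sub_le_chordSq ht0 hy.2)
  have hratio0 : 0 ≤ (1 - t) / √(chordSq y t) := div_nonneg (sub_nonneg.2 ht1.le) hs.le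
  have hrpow : (1 - t) / √(chordSq y t) * √(chordSq y t) ^ (α - 1) =
      (1 - t) * chordSq y t ^ ((α - 2) / 2) := by
    rw [sqrt_eq_rpow, ← rpow_mul hu.le, div_eq_mul_inv, ← rpow_neg_one, ← rpow_mul hu.le,
      mul_assoc, ← rpow_add hu]
    ring_nf
  calc ((1 - t) / √(chordSq y t)) ^ m * √(chordSq y t) ^ (α - 1)
      ≤ (1 - t) / √(chordSq y t) * √(chordSq y t) ^ (α - 1) :=
        mul_le_mul_of_nonneg_right (pow_le_of_le_one hratio0 hratio hm) (rpow_nonneg hs.le _)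
    _ = (1 - t) * chordSq y t ^ ((α - 2) / 2) := hrpow
    _ ≤ _ := one_sub_mul_chordSq_rpow_le hα ht0 ht1 hy

/-- Comparing with the derivative of `g` avoids integrating the dominating function, which is
singular at `t = 1` when `y = 1`. -/
lemma integral_integrand_le {m : ℕ} (hm : m ≠ 0) (hα : 0 < α) (hy : y ∈ Icc (1 / 2 : ℝ) 1) :
    ∫ t in (0 : ℝ)..1, ((1 - t) / √(chordSq y t)) ^ m * √(chordSq y t) ^ (α - 1) ≤
      (1 - (2 - 2 * y) ^ (α / 2)) / α + 1 / (1 + y) := by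
  set f := fun t => ((1 - t) / √(chordSq y t)) ^ m * √(chordSq y t) ^ (α - 1)
  set g := fun t => -(chordSq y t ^ (α / 2) / α) + t * (1 / (1 + y))
  have hg : g 1 - g 0 = (1 - (2 - 2 * y) ^ (α / 2)) / α + 1 / (1 + y) := by
    simp only [g, chordSq]
    norm_num
    ring_nf
  by_cases hf : IntervalIntegrable f MeasureTheory.volume 0 1
  · rw [← hg]
    refine intervalIntegral.integral_le_sub_of_hasDeriv_right_of_le zero_le_one ?_
      (fun t ht => ?_) ((intervalIntegrable_iff_integrableOn_Icc_of_le zero_le_one).1 hf)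
      (fun t ht => integrand_le hm hα.le ht.1.le ht.2 hy)
    · exact ((continuous_chordSq.rpow_const fun _ => Or.inr (by positivity)).div_const α
        |>.neg.add (continuous_mul_const _)).continuousOn
    · exact ((hasDerivAt_neg_chordSq_rpow_div hα.ne' (chordSq_pos ht.1.le ht.2 hy.2)).add
        ((hasDerivAt_id t).mul_const _) |>.congr_deriv (by simp)).hasDerivWithinAt
  · rw [intervalIntegral.integral_undef hf]
    have hc : (2 - 2 * y) ^ (α / 2) ≤ 1 :=
      rpow_le_one (by linarith [hy.2]) (by linarith [hy.1]) (by positivity)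
    have : 0 ≤ (1 - (2 - 2 * y) ^ (α / 2)) / α := div_nonneg (by linarith) hα.le
    have : 0 < 1 / (1 + y) := by have := hy.1; positivity
    linarith

end integrand

lemma prod_one_sub_div_mem_Icc {α : ℝ} (hα : α ∈ Icc (0 : ℝ) 1) (s : Finset ℕ) (hs : 0 ∉ s) :
    ∏ k ∈ s, (1 - α / k) ∈ Icc (0 : ℝ) 1 := by
  have hk : ∀ k ∈ s, 0 ≤ α / k ∧ α / k ≤ 1 := fun k hk =>
    ⟨div_nonneg hα.1 k.cast_nonneg, div_le_one_of_le₀ (hα.2.trans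
      (Nat.one_le_cast.2 (Nat.pos_of_ne_zero (ne_of_mem_of_not_mem hk hs)))) k.cast_nonneg⟩
  exact ⟨Finset.prod_nonneg fun k h => by linarith [hk k h],
    Finset.prod_le_one (fun k h => by linarith [hk k h]) fun k h => by linarith [hk k h]⟩

lemma one_add_mul_log_two_le_two_rpow (α : ℝ) : 1 + α * log 2 ≤ (2 : ℝ) ^ α := by
  rw [rpow_def_of_pos two_pos, mul_comm, add_comm]
  exact add_one_le_exp _

theorem stmt_18 (α : ℝ) (hα : α ∈ Set.Ioo (0 : ℝ) 1) (y : ℝ)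
    (hy : y ∈ Set.Icc (1 / 2 : ℝ) 1) (n : ℕ) (hn : 27 ≤ n) :
    (2 : ℝ) ^ α ≥
      α * (∏ k ∈ Finset.Icc 1 (2 * n - 1), (1 - α / k)) / (2 * n) +
        (2 - 2 * y) ^ (α / 2) +
        α * (∏ k ∈ Finset.Icc 1 (2 * n - 1), (1 - α / k)) *
          ∫ t in (0 : ℝ)..1,
            ((1 - t) / Real.sqrt (1 + t ^ 2 - 2 * t * y)) ^ (2 * n - 1) *
              Real.sqrt (1 + t ^ 2 - 2 * t * y) ^ (α - 1) := by
  obtain ⟨hα0, hα1⟩ := hα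
  set β := ∏ k ∈ Finset.Icc 1 (2 * n - 1), (1 - α / (k : ℝ))
  set c := (2 - 2 * y) ^ (α / 2)
  obtain ⟨hβ0, hβ1⟩ :=
    prod_one_sub_div_mem_Icc ⟨hα0.le, hα1.le⟩ (Finset.Icc 1 (2 * n - 1)) (by simp)
  have hc : c ≤ 1 := rpow_le_one (by linarith [hy.2]) (by linarith [hy.1]) (by positivity)
  have hI := integral_integrand_le (by omega : 2 * n - 1 ≠ 0) hα0 hy
  have hy' : 1 / (1 + y) ≤ 2 / 3 := by
    rw [div_le_div_iff₀ (by linarith [hy.1]) (by norm_num)]; linarith [hy.1]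
  have hn' : 1 / (2 * (n : ℝ)) ≤ 1 / 54 :=
    one_div_le_one_div_of_le (by norm_num) (by norm_cast; omega)
  calc α * β / (2 * n) + c + α * β * _
      ≤ α * β * (1 / 54) + c + α * β * ((1 - c) / α + 2 / 3) := by
        rw [div_eq_mul_one_div (α * β)]
        gcongr
        exact hI.trans (by linarith)
    _ = 1 - (1 - β) * (1 - c) + α * β * (37 / 54) := by field_simp; ring
    _ ≤ 1 + α * log 2 := by
        nlinarith [mul_nonneg (sub_nonneg.2 hβ1) (sub_nonneg.2 hc), log_two_gt_d9]
    _ ≤ 2 ^ α := one_add_mul_log_two_le_two_rpow α
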